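/- arXiv:1710.10037 — 4 statements merged into one kernel-verified Lean document; each statement's English description precedes it below -/
import Mathlib

section
/- Let N be a finite state space with a canonical path γ_{IF} assigned to each ordered pair (I,F) of distinct states, each path being a sequence of transitions (edges) of a Markov chain with weights w_e = π(M)P(M,M'). Suppose that for every transition e, ∑_{(I,F) : e ∈ γ_{IF}} π(I)π(F) ≤ b·w_e. Then for every S with 0 < π(S) ≤ 1/2, the flow across the cut satisfies ∑_{e ∈ cut(S)} w_e ≥ (1/b)·∑_{I∈S,F∈Sᶜ} π(I)π(F) ≥ π(S)/(2b), and hence the conductance Φ ≥ 1/(2b). -/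
/-!
Every canonical path from `I ∈ S` to `F ∉ S` crosses the cut of `S`, so the demand
`∑_{I ∈ S, F ∉ S} π I π F` is covered by the loads of the cut edges, each of which is at most
`b · w e`. Since `π` is a probability distribution, that demand equals `π(S) (1 - π(S)) ≥ π(S) / 2`.
-/

open Finset

theorem Finset.sum_le_sum_load_of_forall_exists_mem {ι κ R : Type*} [Fintype ι] [DecidableEq κ]
    [AddCommMonoid R] [PartialOrder R] [IsOrderedAddMonoid R]
    (D : Finset ι) (C : Finset κ) (γ : ι → Finset κ) (g : ι → R) (hg : ∀ i, 0 ≤ g i)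
    (hroute : ∀ i ∈ D, ∃ e ∈ γ i, e ∈ C) :
    ∑ i ∈ D, g i ≤ ∑ e ∈ C, ∑ i ∈ univ.filter (fun i => e ∈ γ i), g i := by
  have hle : ∀ i ∈ D, g i ≤ ∑ e ∈ C, if e ∈ γ i then g i else 0 := by
    intro i hi
    obtain ⟨e, heγ, heC⟩ := hroute i hi
    calc g i = if e ∈ γ i then g i else 0 := (if_pos heγ).symm
      _ ≤ _ := single_le_sum (f := fun e => if e ∈ γ i then g i else 0)
          (fun e _ => by split_ifs <;> simp [hg i]) heC
  calc ∑ i ∈ D, g i ≤ ∑ i ∈ D, ∑ e ∈ C, if e ∈ γ i then g i else 0 := sum_le_sum hle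
    _ ≤ ∑ i, ∑ e ∈ C, if e ∈ γ i then g i else 0 :=
        sum_le_sum_of_subset_of_nonneg (subset_univ D)
          fun i _ _ => sum_nonneg fun e _ => by split_ifs <;> simp [hg i]
    _ = ∑ e ∈ C, ∑ i ∈ univ.filter (fun i => e ∈ γ i), g i := by
        rw [sum_comm]
        simp only [sum_filter]

theorem Finset.sum_mul_sum_compl_eq {N : Type*} [Fintype N] [DecidableEq N] (π : N → ℝ)
    (hπ_sum : ∑ M, π M = 1) (S : Finset N) :
    ∑ I ∈ S, ∑ F ∈ Sᶜ, π I * π F = (∑ M ∈ S, π M) * (1 - ∑ M ∈ S, π M) := by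
  rw [← sum_mul_sum, ← hπ_sum, ← sum_add_sum_compl S π, add_sub_cancel_left]

theorem sum_mul_sum_compl_le_mul_sum_cut {N : Type*} [Fintype N] [DecidableEq N]
    (P : N → N → ℝ) (π : N → ℝ) (hπ_nonneg : ∀ M, 0 ≤ π M) (w : N × N → ℝ)
    (γ : N → N → Finset (N × N)) (b : ℝ)
    (hload : ∀ e : N × N,
      (∑ p ∈ univ.filter (fun p : N × N => e ∈ γ p.1 p.2), π p.1 * π p.2) ≤ b * w e)
    (S : Finset N) (hcross : ∀ I F : N, I ∈ S → F ∉ S →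
      ∃ e ∈ γ I F, e.1 ∈ S ∧ e.2 ∉ S ∧ 0 < P e.1 e.2) :
    ∑ I ∈ S, ∑ F ∈ Sᶜ, π I * π F ≤
      b * ∑ e ∈ univ.filter (fun e : N × N => e.1 ∈ S ∧ e.2 ∉ S ∧ 0 < P e.1 e.2), w e := by
  rw [← sum_product', mul_sum]
  refine (sum_le_sum_load_of_forall_exists_mem _ _ (fun p : N × N => γ p.1 p.2) _
    (fun p : N × N => mul_nonneg (hπ_nonneg p.1) (hπ_nonneg p.2)) ?_).trans
    (sum_le_sum fun e _ => hload e)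
  rintro ⟨I, F⟩ hIF
  rw [mem_product, mem_compl] at hIF
  obtain ⟨e, heγ, hcut⟩ := hcross I F hIF.1 hIF.2
  exact ⟨e, heγ, mem_filter.2 ⟨mem_univ e, hcut⟩⟩

theorem canonical_paths_give_conductance_bound_general {N : Type*} [Fintype N] [DecidableEq N]
    (P : N → N → ℝ) (π : N → ℝ)
    (hπ_nonneg : ∀ M : N, 0 ≤ π M) (hπ_sum : ∑ M : N, π M = 1)
    (w : N × N → ℝ)
    (γ : N → N → Finset (N × N)) (b : ℝ) (hb : 0 < b)
    (hload : ∀ e : N × N,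
      (∑ p ∈ Finset.univ.filter (fun p : N × N => e ∈ γ p.1 p.2), π p.1 * π p.2) ≤ b * w e)
    (hcross : ∀ (S : Finset N) (I F : N), I ∈ S → F ∉ S →
      ∃ e ∈ γ I F, e.1 ∈ S ∧ e.2 ∉ S ∧ 0 < P e.1 e.2) :
    ∀ S : Finset N, 0 < ∑ M ∈ S, π M → (∑ M ∈ S, π M) ≤ 1 / 2 →
      ((1 / b) * ∑ I ∈ S, ∑ F ∈ Sᶜ, π I * π F ≤
        ∑ e ∈ Finset.univ.filter (fun e : N × N => e.1 ∈ S ∧ e.2 ∉ S ∧ 0 < P e.1 e.2), w e) ∧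
      ((∑ M ∈ S, π M) / (2 * b) ≤
        ∑ e ∈ Finset.univ.filter (fun e : N × N => e.1 ∈ S ∧ e.2 ∉ S ∧ 0 < P e.1 e.2), w e) ∧
      (1 / (2 * b) ≤
        (∑ e ∈ Finset.univ.filter (fun e : N × N => e.1 ∈ S ∧ e.2 ∉ S ∧ 0 < P e.1 e.2), w e) /
          (∑ M ∈ S, π M)) := by
  intro S hS_pos hS_half
  have hflow := sum_mul_sum_compl_le_mul_sum_cut P π hπ_nonneg w γ b hload S (hcross S)
  have hdemand : (∑ M ∈ S, π M) / 2 ≤ ∑ I ∈ S, ∑ F ∈ Sᶜ, π I * π F := by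
    rw [sum_mul_sum_compl_eq π hπ_sum S]
    nlinarith
  have hcut_lower : (∑ M ∈ S, π M) / (2 * b) ≤
      ∑ e ∈ univ.filter (fun e : N × N => e.1 ∈ S ∧ e.2 ∉ S ∧ 0 < P e.1 e.2), w e := by
    rw [div_le_iff₀ (by positivity)]
    linarith
  refine ⟨?_, hcut_lower, ?_⟩
  · rw [one_div_mul_eq_div, div_le_iff₀ hb]
    linarith
  · rw [le_div_iff₀ hS_pos, one_div_mul_eq_div]
    exact hcut_lower

theorem canonical_paths_give_conductance_bound {N : Type*} [Fintype N] [DecidableEq N]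
    (P : N → N → ℝ) (π : N → ℝ)
    (hπ_nonneg : ∀ M : N, 0 ≤ π M) (hπ_sum : ∑ M : N, π M = 1)
    (w : N × N → ℝ) (hw : ∀ e : N × N, w e = π e.1 * P e.1 e.2)
    (hw_nonneg : ∀ e : N × N, 0 ≤ w e)
    (γ : N → N → Finset (N × N)) (b : ℝ) (hb : 0 < b)
    (hload : ∀ e : N × N,
      (∑ p ∈ Finset.univ.filter (fun p : N × N => e ∈ γ p.1 p.2), π p.1 * π p.2) ≤ b * w e)
    (hcross : ∀ (S : Finset N) (I F : N), I ∈ S → F ∉ S →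
      ∃ e ∈ γ I F, e.1 ∈ S ∧ e.2 ∉ S ∧ 0 < P e.1 e.2) :
    ∀ S : Finset N, 0 < ∑ M ∈ S, π M → (∑ M ∈ S, π M) ≤ 1 / 2 →
      ((1 / b) * ∑ I ∈ S, ∑ F ∈ Sᶜ, π I * π F ≤
        ∑ e ∈ Finset.univ.filter (fun e : N × N => e.1 ∈ S ∧ e.2 ∉ S ∧ 0 < P e.1 e.2), w e) ∧
      ((∑ M ∈ S, π M) / (2 * b) ≤
        ∑ e ∈ Finset.univ.filter (fun e : N × N => e.1 ∈ S ∧ e.2 ∉ S ∧ 0 < P e.1 e.2), w e) ∧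
      (1 / (2 * b) ≤
        (∑ e ∈ Finset.univ.filter (fun e : N × N => e.1 ∈ S ∧ e.2 ∉ S ∧ 0 < P e.1 e.2), w e) /
          (∑ M ∈ S, π M)) :=
  canonical_paths_give_conductance_bound_general P π hπ_nonneg hπ_sum w γ b hb hload hcross
end

section
/- Let N be a finite state space, π the Gibbs distribution with parameter β ≥ 0 for utility U with range [U_min, U_max], and P the Metropolis chain with proposal probability 1/(2mn) to each neighbor and acceptance probability min(1, e^{β(U(j)−U(i))}). Let e = (M,M') be a transition with weight w_e = π(M)P(M,M'). Then for any states I, F and any state σ ∈ N, π(I)π(F) ≤ π(M)·π(σ)·e^{2β(U_max−U_min)}, and consequently π(I)π(F) ≤ 2mn·e^{3β(U_max−U_min)}·π(σ)·w_e. -/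
/-!
Gibbs weights satisfy `π i = π j * exp (β (U i - U j))`, and with `0 ≤ β` every such factor
lies between `exp (-β (Umax - Umin))` and `exp (β (Umax - Umin))`; the same lower bound holds for
the Metropolis acceptance probability, so `w` is at least `π M * exp (-β (Umax - Umin)) / (2 m n)`.
-/

section Energy

variable {N : Type*} {U : N → ℝ} {β Umin Umax : ℝ}

lemma mul_sub_le_mul_sub_of_isGreatest_of_isLeast (hβ : 0 ≤ β)
    (hmax : IsGreatest (Set.range U) Umax) (hmin : IsLeast (Set.range U) Umin) (i j : N) :
    β * (U i - U j) ≤ β * (Umax - Umin) :=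
  mul_le_mul_of_nonneg_left (by linarith [hmax.2 ⟨i, rfl⟩, hmin.2 ⟨j, rfl⟩]) hβ

lemma exp_neg_le_metropolis_acceptance (hβ : 0 ≤ β)
    (hmax : IsGreatest (Set.range U) Umax) (hmin : IsLeast (Set.range U) Umin) (i j : N) :
    Real.exp (-(β * (Umax - Umin))) ≤ min 1 (Real.exp (β * (U j - U i))) := by
  have hii := mul_sub_le_mul_sub_of_isGreatest_of_isLeast hβ hmax hmin i i
  have hij := mul_sub_le_mul_sub_of_isGreatest_of_isLeast hβ hmax hmin i j
  exact le_min (Real.exp_le_one_iff.mpr (by linarith)) (Real.exp_le_exp.mpr (by linarith))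

variable [Fintype N] {π : N → ℝ}

lemma gibbs_eq_mul_exp (hπ : ∀ M : N, π M = Real.exp (β * U M) / ∑ M' : N, Real.exp (β * U M'))
    (i j : N) : π i = π j * Real.exp (β * (U i - U j)) := by
  rw [hπ i, hπ j, div_mul_eq_mul_div, ← Real.exp_add]
  ring_nf

lemma gibbs_pos (hπ : ∀ M : N, π M = Real.exp (β * U M) / ∑ M' : N, Real.exp (β * U M'))
    (i : N) : 0 < π i := by
  have : Nonempty N := ⟨i⟩
  rw [hπ i]
  exact div_pos (Real.exp_pos _) (Finset.sum_pos (fun _ _ ↦ Real.exp_pos _) Finset.univ_nonempty)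

lemma gibbs_mul_le (hπ : ∀ M : N, π M = Real.exp (β * U M) / ∑ M' : N, Real.exp (β * U M'))
    (hβ : 0 ≤ β) (hmax : IsGreatest (Set.range U) Umax) (hmin : IsLeast (Set.range U) Umin)
    (I F M σ : N) : π I * π F ≤ π M * π σ * Real.exp (2 * β * (Umax - Umin)) := by
  have hI := mul_sub_le_mul_sub_of_isGreatest_of_isLeast hβ hmax hmin I M
  have hF := mul_sub_le_mul_sub_of_isGreatest_of_isLeast hβ hmax hmin F σ
  have hMσ := mul_pos (gibbs_pos hπ M) (gibbs_pos hπ σ)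
  calc π I * π F = π M * π σ * Real.exp (β * (U I - U M) + β * (U F - U σ)) := by
        rw [gibbs_eq_mul_exp hπ I M, gibbs_eq_mul_exp hπ F σ, Real.exp_add]; ring
    _ ≤ π M * π σ * Real.exp (2 * β * (Umax - Umin)) := by
        gcongr
        linarith

end Energy

theorem metropolis_pair_bound_general {N : Type*} [Fintype N]
    (U : N → ℝ) (β Umin Umax : ℝ) (hβ : 0 ≤ β)
    (hmax : IsGreatest (Set.range U) Umax) (hmin : IsLeast (Set.range U) Umin)
    (m n : ℕ) (hm : 0 < m) (hn : 0 < n)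
    (π : N → ℝ)
    (hπ : ∀ M : N, π M = Real.exp (β * U M) / ∑ M' : N, Real.exp (β * U M'))
    (P : N → N → ℝ) (M M' : N)
    (hP : P M M' = (1 / (2 * (m : ℝ) * n)) * min 1 (Real.exp (β * (U M' - U M))))
    (w : ℝ) (hw : w = π M * P M M') :
    ∀ I F σ : N,
      π I * π F ≤ π M * π σ * Real.exp (2 * β * (Umax - Umin)) ∧
      π I * π F ≤ 2 * (m : ℝ) * n * Real.exp (3 * β * (Umax - Umin)) * π σ * w := by
  intro I F σ
  have hpair := gibbs_mul_le hπ hβ hmax hmin I F M σ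
  refine ⟨hpair, hpair.trans ?_⟩
  have hflow : π M * Real.exp (-(β * (Umax - Umin))) ≤ 2 * (m : ℝ) * n * w := by
    have hmn : (2 * (m : ℝ) * n) ≠ 0 := by positivity
    calc π M * Real.exp (-(β * (Umax - Umin))) ≤ π M * min 1 (Real.exp (β * (U M' - U M))) :=
          mul_le_mul_of_nonneg_left (exp_neg_le_metropolis_acceptance hβ hmax hmin M M')
            (gibbs_pos hπ M).le
      _ = 2 * (m : ℝ) * n * w := by rw [hw, hP]; field_simp
  have hσ := gibbs_pos hπ σ
  calc π M * π σ * Real.exp (2 * β * (Umax - Umin))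
      = Real.exp (3 * β * (Umax - Umin)) * π σ * (π M * Real.exp (-(β * (Umax - Umin)))) := by
        rw [show 2 * β * (Umax - Umin) = 3 * β * (Umax - Umin) + -(β * (Umax - Umin)) by ring,
          Real.exp_add]
        ring
    _ ≤ Real.exp (3 * β * (Umax - Umin)) * π σ * (2 * (m : ℝ) * n * w) := by gcongr
    _ = 2 * (m : ℝ) * n * Real.exp (3 * β * (Umax - Umin)) * π σ * w := by ring

theorem metropolis_pair_bound {N : Type*} [Fintype N] [Nonempty N]
    (U : N → ℝ) (β Umin Umax : ℝ) (hβ : 0 ≤ β)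
    (hmax : IsGreatest (Set.range U) Umax) (hmin : IsLeast (Set.range U) Umin)
    (m n : ℕ) (hm : 0 < m) (hn : 0 < n)
    (π : N → ℝ)
    (hπ : ∀ M : N, π M = Real.exp (β * U M) / ∑ M' : N, Real.exp (β * U M'))
    (P : N → N → ℝ) (M M' : N)
    (hP : P M M' = (1 / (2 * (m : ℝ) * n)) * min 1 (Real.exp (β * (U M' - U M))))
    (w : ℝ) (hw : w = π M * P M M') :
    ∀ I F σ : N,
      π I * π F ≤ π M * π σ * Real.exp (2 * β * (Umax - Umin)) ∧
      π I * π F ≤ 2 * (m : ℝ) * n * Real.exp (3 * β * (Umax - Umin)) * π σ * w :=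
  metropolis_pair_bound_general U β Umin Umax hβ hmax hmin m n hm hn π hπ P M M' hP w hw
end

section
/- Under the hypotheses of the canonical-path bound for the Metropolis matching chain (for every transition e, the set C_e of pairs routed through e satisfies |C_e| < |N| and there is an injection σ_e : C_e → N with π(I)π(F) ≤ 2mn·α³·π(σ_e(I,F))·w_e for all (I,F) ∈ C_e, where α = e^{β(U_max−U_min)}), we have ∑_{(I,F)∈C_e} π(I)π(F) ≤ 2mn·α³·w_e, and consequently the conductance satisfies Φ ≥ 1/(4mn·α³). -/
private lemma sum_biUnion_le_aux {ι α : Type*} [DecidableEq α] (B : Finset ι)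
    (C : ι → Finset α) (f : α → ℝ) (hf : ∀ a, 0 ≤ f a) :
    ∑ x ∈ B.biUnion C, f x ≤ ∑ e ∈ B, ∑ x ∈ C e, f x := by
  classical
  induction B using Finset.induction_on with
  | empty => simp
  | @insert a s hnot ih =>
    rw [Finset.biUnion_insert, Finset.sum_insert hnot]
    have h1 : ∑ x ∈ C a ∪ s.biUnion C, f x ≤ ∑ x ∈ C a, f x + ∑ x ∈ s.biUnion C, f x := by
      have := Finset.sum_union_inter (s₁ := C a) (s₂ := s.biUnion C) (f := f)
      have h2 : 0 ≤ ∑ x ∈ C a ∩ s.biUnion C, f x :=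
        Finset.sum_nonneg fun x _ => hf x
      linarith
    linarith [ih]

theorem canonical_path_congestion_and_conductance {N : Type*} [Fintype N] [DecidableEq N]
    (P : N → N → ℝ) (π : N → ℝ)
    (hπ_nonneg : ∀ M : N, 0 ≤ π M) (hπ_sum : ∑ M : N, π M = 1)
    (m n : ℕ) (hm : 0 < m) (hn : 0 < n) (α : ℝ) (hα : 1 ≤ α)
    (w : N × N → ℝ) (hw : ∀ e : N × N, w e = π e.1 * P e.1 e.2)
    (hw_nonneg : ∀ e : N × N, 0 ≤ w e)
    (C : N × N → Finset (N × N))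
    (hCcard : ∀ e : N × N, (C e).card < Fintype.card N)
    (σ : N × N → N × N → N)
    (hσinj : ∀ e : N × N, Set.InjOn (σ e) (C e))
    (hbound : ∀ e : N × N, ∀ p ∈ C e,
      π p.1 * π p.2 ≤ 2 * (m : ℝ) * n * α ^ 3 * π (σ e p) * w e)
    (hroute : ∀ (S : Finset N) (I F : N), I ∈ S → F ∉ S →
      ∃ e : N × N, e.1 ∈ S ∧ e.2 ∉ S ∧ 0 < P e.1 e.2 ∧ (I, F) ∈ C e) :
    (∀ e : N × N, (∑ p ∈ C e, π p.1 * π p.2) ≤ 2 * (m : ℝ) * n * α ^ 3 * w e) ∧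
    (∀ S : Finset N, 0 < ∑ M ∈ S, π M → (∑ M ∈ S, π M) ≤ 1 / 2 →
      1 / (4 * (m : ℝ) * n * α ^ 3) ≤
        (∑ e ∈ Finset.univ.filter (fun e : N × N => e.1 ∈ S ∧ e.2 ∉ S ∧ 0 < P e.1 e.2), w e) /
          (∑ M ∈ S, π M)) := by
  classical
  have hm' : (0:ℝ) < m := by exact_mod_cast hm
  have hn' : (0:ℝ) < n := by exact_mod_cast hn
  have hα0 : (0:ℝ) < α := lt_of_lt_of_le one_pos hα
  have hK : (0:ℝ) < 2 * (m : ℝ) * n * α ^ 3 := by positivity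
  have part1 : ∀ e : N × N, (∑ p ∈ C e, π p.1 * π p.2) ≤ 2 * (m : ℝ) * n * α ^ 3 * w e := by
    intro e
    have hsum1 : ∑ p ∈ C e, π (σ e p) ≤ 1 := by
      rw [← Finset.sum_image (fun x hx y hy h => hσinj e hx hy h)]
      calc ∑ M ∈ (C e).image (σ e), π M ≤ ∑ M : N, π M :=
            Finset.sum_le_sum_of_subset_of_nonneg (Finset.subset_univ _)
              (fun M _ _ => hπ_nonneg M)
        _ = 1 := hπ_sum
    calc ∑ p ∈ C e, π p.1 * π p.2
        ≤ ∑ p ∈ C e, 2 * (m : ℝ) * n * α ^ 3 * π (σ e p) * w e :=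
          Finset.sum_le_sum (fun p hp => hbound e p hp)
      _ = (2 * (m : ℝ) * n * α ^ 3 * w e) * ∑ p ∈ C e, π (σ e p) := by
          rw [Finset.mul_sum]; exact Finset.sum_congr rfl fun p _ => by ring
      _ ≤ (2 * (m : ℝ) * n * α ^ 3 * w e) * 1 := by
          exact mul_le_mul_of_nonneg_left hsum1 (mul_nonneg hK.le (hw_nonneg e))
      _ = 2 * (m : ℝ) * n * α ^ 3 * w e := mul_one _
  refine ⟨part1, ?_⟩
  intro S hS0 hShalf
  set cut := Finset.univ.filter (fun e : N × N => e.1 ∈ S ∧ e.2 ∉ S ∧ 0 < P e.1 e.2) with hcut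
  set Q := ∑ e ∈ cut, w e with hQ
  have hf_nonneg : ∀ p : N × N, 0 ≤ π p.1 * π p.2 :=
    fun p => mul_nonneg (hπ_nonneg _) (hπ_nonneg _)
  -- S ×ˢ Sᶜ ⊆ cut.biUnion C
  have hsub : S ×ˢ Sᶜ ⊆ cut.biUnion C := by
    intro p hp
    rw [Finset.mem_product] at hp
    obtain ⟨e, he1, he2, he3, he4⟩ := hroute S p.1 p.2 hp.1 (by simpa using hp.2)
    rw [Finset.mem_biUnion]
    exact ⟨e, Finset.mem_filter.mpr ⟨Finset.mem_univ _, he1, he2, he3⟩, by simpa using he4⟩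
  have hprod : (∑ M ∈ S, π M) * (∑ M ∈ Sᶜ, π M) ≤ 2 * (m : ℝ) * n * α ^ 3 * Q := by
    calc (∑ M ∈ S, π M) * (∑ M ∈ Sᶜ, π M)
        = ∑ p ∈ S ×ˢ Sᶜ, π p.1 * π p.2 := by rw [Finset.sum_mul_sum, Finset.sum_product]
      _ ≤ ∑ p ∈ cut.biUnion C, π p.1 * π p.2 :=
          Finset.sum_le_sum_of_subset_of_nonneg hsub (fun p _ _ => hf_nonneg p)
      _ ≤ ∑ e ∈ cut, ∑ p ∈ C e, π p.1 * π p.2 :=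
          sum_biUnion_le_aux cut C _ hf_nonneg
      _ ≤ ∑ e ∈ cut, 2 * (m : ℝ) * n * α ^ 3 * w e :=
          Finset.sum_le_sum fun e _ => part1 e
      _ = 2 * (m : ℝ) * n * α ^ 3 * Q := by rw [hQ, Finset.mul_sum]
  have hcompl : ∑ M ∈ Sᶜ, π M = 1 - ∑ M ∈ S, π M := by
    have := Finset.sum_add_sum_compl S π
    linarith [this.symm ▸ hπ_sum]
  have hhalf : (1:ℝ)/2 ≤ ∑ M ∈ Sᶜ, π M := by rw [hcompl]; linarith
  have hmain : (∑ M ∈ S, π M) * (1/2) ≤ 2 * (m : ℝ) * n * α ^ 3 * Q := by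
    calc (∑ M ∈ S, π M) * (1/2) ≤ (∑ M ∈ S, π M) * (∑ M ∈ Sᶜ, π M) :=
          mul_le_mul_of_nonneg_left hhalf (le_of_lt hS0)
      _ ≤ _ := hprod
  rw [le_div_iff₀ hS0]
  have h4 : (0:ℝ) < 4 * (m : ℝ) * n * α ^ 3 := by positivity
  rw [div_mul_eq_mul_div, one_mul, div_le_iff₀ h4]
  linarith [hmain]
end

section
/- Fix perfect matchings I and F of K_{m,n} viewed as injective functions f, g : Fin m → Fin n. Define a sequence of injective functions h_0 = f, and for k = 0,…,m−1: if h_k(k) = g(k) then h_{k+1} = h_k; if g(k) is not in the image of h_k, then h_{k+1} agrees with h_k except h_{k+1}(k) = g(k); otherwise, if h_k(y') = g(k) for some y' ≠ k, then h_{k+1} swaps: h_{k+1}(k) = g(k), h_{k+1}(y') = h_k(k), and h_{k+1} = h_k elsewhere. Then each h_k is injective, and for every k, h_k agrees with g on all indices < k; in particular h_m = g. -/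
/-!
Each step either leaves `h` unchanged, redirects index `k` to an unused value, or composes `h`
with the transposition of `k` and the index already carrying `g k`; all three preserve
injectivity. A step only changes indices that are `k` or that carry the value `g k`, and by
injectivity of `g` no index `j < k` carries `g k`, so the agreement with `g` below `k` survives
and is extended to `k`.
-/

open Function

section LocalMove

variable {α β : Type*} [DecidableEq α]

/-- `v` arises from `u` by one step of the canonical path that makes index `a` take value `b`. -/
def IsLocalMove (u v : α → β) (a : α) (b : β) : Prop :=
  (u a = b ∧ v = u) ∨
  (b ∉ Set.range u ∧ v = update u a b) ∨
  (∃ y, y ≠ a ∧ u y = b ∧ v = update (update u a b) y (u a))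

theorem Function.Injective.update_of_notMem_range {u : α → β} (hu : Injective u) {a : α} {b : β}
    (hb : b ∉ Set.range u) : Injective (update u a b) := by
  intro x z hxz
  by_cases hx : x = a <;> by_cases hz : z = a
  · rw [hx, hz]
  · rw [hx, update_self, update_of_ne hz] at hxz
    exact absurd ⟨z, hxz.symm⟩ hb
  · rw [hz, update_self, update_of_ne hx] at hxz
    exact absurd ⟨x, hxz⟩ hb
  · rw [update_of_ne hx, update_of_ne hz] at hxz
    exact hu hxz

theorem update_update_eq_comp_swap {u : α → β} {a y : α} {b : β} (hy : u y = b) :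
    update (update u a b) y (u a) = u ∘ Equiv.swap a y := by
  rw [Equiv.swap_comm, Equiv.comp_swap_eq_update, hy]

namespace IsLocalMove

variable {u v : α → β} {a : α} {b : β}

theorem injective (hmove : IsLocalMove u v a b) (hu : Injective u) : Injective v := by
  rcases hmove with ⟨-, rfl⟩ | ⟨hb, rfl⟩ | ⟨y, -, hy, rfl⟩
  · exact hu
  · exact hu.update_of_notMem_range hb
  · rw [update_update_eq_comp_swap hy]
    exact hu.comp (Equiv.swap a y).injective

theorem apply_self (hmove : IsLocalMove u v a b) : v a = b := by
  rcases hmove with ⟨hab, rfl⟩ | ⟨-, rfl⟩ | ⟨y, hya, -, rfl⟩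
  · exact hab
  · exact update_self a b u
  · rw [update_of_ne hya.symm, update_self]

theorem apply_of_ne (hmove : IsLocalMove u v a b) {x : α} (hxa : x ≠ a) (hxb : u x ≠ b) :
    v x = u x := by
  rcases hmove with ⟨-, rfl⟩ | ⟨-, rfl⟩ | ⟨y, -, hy, rfl⟩
  · rfl
  · exact update_of_ne hxa b u
  · have hxy : x ≠ y := by rintro rfl; exact hxb hy
    rw [update_of_ne hxy, update_of_ne hxa]

end IsLocalMove

end LocalMove

theorem injective_and_eqOn_lt_of_isLocalMove {m : ℕ} {β : Type*} {g : Fin m → β}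
    (hg : Injective g) {h : ℕ → Fin m → β} (h0 : Injective (h 0))
    (hstep : ∀ (k : ℕ) (hk : k < m), IsLocalMove (h k) (h (k + 1)) ⟨k, hk⟩ (g ⟨k, hk⟩)) :
    ∀ k ≤ m, Injective (h k) ∧ ∀ j : Fin m, (j : ℕ) < k → h k j = g j := by
  intro k
  induction k with
  | zero => exact fun _ => ⟨h0, fun j hj => absurd hj (Nat.not_lt_zero _)⟩
  | succ k ih =>
    intro hkm
    have hk : k < m := by omega
    obtain ⟨hinj, hagree⟩ := ih hk.le
    refine ⟨(hstep k hk).injective hinj, fun j hj => ?_⟩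
    rcases (Nat.lt_succ_iff.mp hj).lt_or_eq with hjk | hjk
    · have hja : j ≠ ⟨k, hk⟩ := fun hja => hjk.ne (congrArg Fin.val hja)
      rw [(hstep k hk).apply_of_ne hja (by rw [hagree j hjk]; exact hg.ne hja), hagree j hjk]
    · obtain rfl : j = ⟨k, hk⟩ := Fin.ext hjk
      exact (hstep k hk).apply_self

theorem canonical_path_reaches_target {m n : ℕ} (f g : Fin m → Fin n)
    (hf : Function.Injective f) (hg : Function.Injective g)
    (h : ℕ → Fin m → Fin n) (h0 : h 0 = f)
    (hstep : ∀ (k : ℕ) (hk : k < m),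
      (h k ⟨k, hk⟩ = g ⟨k, hk⟩ ∧ h (k + 1) = h k) ∨
      (g ⟨k, hk⟩ ∉ Set.range (h k) ∧
        h (k + 1) = Function.update (h k) ⟨k, hk⟩ (g ⟨k, hk⟩)) ∨
      (∃ y : Fin m, y ≠ ⟨k, hk⟩ ∧ h k y = g ⟨k, hk⟩ ∧
        h (k + 1) =
          Function.update (Function.update (h k) ⟨k, hk⟩ (g ⟨k, hk⟩)) y (h k ⟨k, hk⟩))) :
    (∀ k ≤ m, Function.Injective (h k)) ∧
    (∀ k ≤ m, ∀ j : Fin m, (j : ℕ) < k → h k j = g j) ∧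
    h m = g := by
  have key := injective_and_eqOn_lt_of_isLocalMove hg (h0 ▸ hf) hstep
  exact ⟨fun k hk => (key k hk).1, fun k hk => (key k hk).2,
    funext fun j => (key m le_rfl).2 j j.isLt⟩
end
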